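/- Two-representative entropy bound: let q_0, q_1 be probability vectors on a finite alphabet, λ ∈ [0,1], and x, z ∈ {0,1}^F with counts g_{uv} = g_{uv}(x,z). Define H(x,z) = g_{00}H(q_0) + g_{11}H(q_1) + g_{01}H(λq_0+(1−λ)q_1) + g_{10}H((1−λ)q_0+λq_1). Then among all z of fixed Hamming weight s₂ ≥ wt(x), H(x,z) is minimized by any z with g_{10}(x,z) = 0. -/
import Mathlib


/-- Hamming weight of a binary vector. -/
def wt {F : ℕ} (x : Fin F → Bool) : ℕ :=
  (Finset.univ.filter fun f => x f = true).card

/-- Number of coordinates `f` with `x f = u` and `z f = v`. -/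
def gcount {F : ℕ} (x z : Fin F → Bool) (u v : Bool) : ℕ :=
  (Finset.univ.filter fun f => x f = u ∧ z f = v).card

/-- Shannon entropy (base 2) of a vector of probabilities. -/
noncomputable def ent {J : ℕ} (p : Fin J → ℝ) : ℝ :=
  -∑ j, p j * Real.logb 2 (p j)

/-- The two-representative output entropy `H(Y|T=t)` for representatives `x, z`. -/
noncomputable def Hpair {F J : ℕ} (q0 q1 : Fin J → ℝ) (lam : ℝ)
    (x z : Fin F → Bool) : ℝ :=
  (gcount x z false false : ℝ) * ent q0 +
  (gcount x z true true : ℝ) * ent q1 +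
  (gcount x z false true : ℝ) * ent (fun j => lam * q0 j + (1 - lam) * q1 j) +
  (gcount x z true false : ℝ) * ent (fun j => (1 - lam) * q0 j + lam * q1 j)

lemma ent_eq {J : ℕ} (p : Fin J → ℝ) :
    ent p = (∑ j, Real.negMulLog (p j)) / Real.log 2 := by
  unfold ent
  rw [← Finset.sum_neg_distrib, Finset.sum_div]
  congr 1; ext j
  rw [Real.negMulLog, Real.logb]
  ring

lemma ent_concave {J : ℕ} (q0 q1 : Fin J → ℝ)
    (hq0 : ∀ j, 0 ≤ q0 j) (hq1 : ∀ j, 0 ≤ q1 j)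
    (lam : ℝ) (hlam0 : 0 ≤ lam) (hlam1 : lam ≤ 1) :
    lam * ent q0 + (1 - lam) * ent q1 ≤ ent (fun j => lam * q0 j + (1 - lam) * q1 j) := by
  rw [ent_eq, ent_eq, ent_eq]
  have hlog : (0:ℝ) < Real.log 2 := Real.log_pos (by norm_num)
  rw [show lam * ((∑ j, Real.negMulLog (q0 j)) / Real.log 2) +
      (1 - lam) * ((∑ j, Real.negMulLog (q1 j)) / Real.log 2)
      = (lam * ∑ j, Real.negMulLog (q0 j) + (1 - lam) * ∑ j, Real.negMulLog (q1 j)) / Real.log 2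
      from by ring, div_le_div_iff_of_pos_right hlog]
  rw [Finset.mul_sum, Finset.mul_sum, ← Finset.sum_add_distrib]
  apply Finset.sum_le_sum
  intro j _
  have := Real.concaveOn_negMulLog.2 (Set.mem_Ici.mpr (hq0 j)) (Set.mem_Ici.mpr (hq1 j))
    hlam0 (by linarith : (0:ℝ) ≤ 1 - lam) (by ring)
  simpa using this

lemma gsplit1 {F : ℕ} (x z : Fin F → Bool) :
    gcount x z true true + gcount x z true false = wt x := by
  classical
  unfold gcount wt
  rw [← Finset.filter_filter, ← Finset.filter_filter]
  have := Finset.card_filter_add_card_filter_not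
    (s := Finset.univ.filter fun f => x f = true) (p := fun f => z f = true)

  simpa [Bool.not_eq_true] using this

lemma gsplit2 {F : ℕ} (x z : Fin F → Bool) :
    gcount x z true true + gcount x z false true = wt z := by
  classical
  unfold gcount wt
  have h1 : ∀ f : Fin F, (x f = true ∧ z f = true) ↔ (z f = true ∧ x f = true) := by tauto
  have h2 : ∀ f : Fin F, (x f = false ∧ z f = true) ↔ (z f = true ∧ ¬ x f = true) := by
    intro f; simp [Bool.not_eq_true, and_comm]
  simp only [h1, h2]
  rw [← Finset.filter_filter, ← Finset.filter_filter]
  exact Finset.card_filter_add_card_filter_not (p := fun f => x f = true)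

lemma gtotal {F : ℕ} (x z : Fin F → Bool) :
    gcount x z false false + gcount x z false true +
      (gcount x z true true + gcount x z true false) = F := by
  classical
  have h1 := gsplit1 x z
  have hx : (Finset.univ.filter fun f => ¬ x f = true).card + wt x = F := by
    unfold wt
    rw [Nat.add_comm]
    simpa using Finset.card_filter_add_card_filter_not
      (s := (Finset.univ : Finset (Fin F))) (p := fun f => x f = true)

  have h0 : gcount x z false false + gcount x z false true
      = (Finset.univ.filter fun f => ¬ x f = true).card := by
    unfold gcount
    have h2 : ∀ f : Fin F, (x f = false ∧ z f = true) ↔ ((¬ x f = true) ∧ z f = true) := by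
      intro f; simp [Bool.not_eq_true]
    have h3 : ∀ f : Fin F, (x f = false ∧ z f = false) ↔ ((¬ x f = true) ∧ ¬ z f = true) := by
      intro f; simp [Bool.not_eq_true]
    simp only [h2, h3]
    rw [← Finset.filter_filter, ← Finset.filter_filter, Nat.add_comm]
    exact Finset.card_filter_add_card_filter_not (p := fun f => z f = true)
  omega

theorem stmt19 (F J : ℕ) (q0 q1 : Fin J → ℝ)
    (hq0_nonneg : ∀ j, 0 ≤ q0 j) (hq1_nonneg : ∀ j, 0 ≤ q1 j)
    (hq0_sum : ∑ j, q0 j = 1) (hq1_sum : ∑ j, q1 j = 1)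
    (lam : ℝ) (hlam0 : 0 ≤ lam) (hlam1 : lam ≤ 1)
    (x : Fin F → Bool) (s2 : ℕ) (hs2 : wt x ≤ s2) (hs2F : s2 ≤ F)
    (z z0 : Fin F → Bool)
    (hz : wt z = s2) (hz0 : wt z0 = s2)
    (hg10 : gcount x z0 true false = 0) :
    Hpair q0 q1 lam x z0 ≤ Hpair q0 q1 lam x z := by
  set H0 := ent q0
  set H1 := ent q1
  set H01 := ent (fun j => lam * q0 j + (1 - lam) * q1 j)
  set H10 := ent (fun j => (1 - lam) * q0 j + lam * q1 j)
  have hC1 : lam * H0 + (1 - lam) * H1 ≤ H01 :=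
    ent_concave q0 q1 hq0_nonneg hq1_nonneg lam hlam0 hlam1
  have hC2 : (1 - lam) * H0 + lam * H1 ≤ H10 := by
    have := ent_concave q1 q0 hq1_nonneg hq0_nonneg lam hlam0 hlam1
    have heq : ent (fun j => lam * q1 j + (1 - lam) * q0 j) = H10 := by
      unfold H10; congr 1; ext j; ring
    rw [heq] at this; linarith
  have key : ∀ y : Fin F → Bool, wt y = s2 →
      Hpair q0 q1 lam x y = (F - s2 : ℝ) * H0 + (wt x : ℝ) * H1 + ((s2 : ℝ) - wt x) * H01
        + (gcount x y true false : ℝ) * (H01 + H10 - H0 - H1) := by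
    intro y hy
    have e1 := gsplit1 x y
    have e2 := gsplit2 x y
    have e3 := gtotal x y
    rw [hy] at e2
    have e1' : (gcount x y true true : ℝ) + gcount x y true false = wt x := by
      exact_mod_cast e1
    have e2' : (gcount x y true true : ℝ) + gcount x y false true = s2 := by
      exact_mod_cast e2
    have e3' : (gcount x y false false : ℝ) + gcount x y false true +
        (gcount x y true true + gcount x y true false) = F := by exact_mod_cast e3
    unfold Hpair
    unfold H0 H1 H01 H10
    have h11 : (gcount x y true true : ℝ) = (wt x : ℝ) - gcount x y true false := by linarith
    have h01 : (gcount x y false true : ℝ) = (s2 : ℝ) - wt x + gcount x y true false := by linarith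
    have h00 : (gcount x y false false : ℝ) = (F : ℝ) - s2 - gcount x y true false := by linarith
    rw [h11, h01, h00]
    ring
  rw [key z hz, key z0 hz0, hg10]
  push_cast
  have ha : (0:ℝ) ≤ (gcount x z true false : ℝ) := Nat.cast_nonneg _
  nlinarith [mul_nonneg ha (by linarith : (0:ℝ) ≤ H01 + H10 - H0 - H1)]
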